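/- For all integers n ≥ 0, optcost(n+1) - optcost(n) = n + m + 2, where m is the unique nonnegative integer with m(m+1)/2 ≤ n < (m+1)(m+2)/2. -/

import Mathlib

/-!
Splitting off the first batch, of size `b`, shows that the optimal cost satisfies
`G n = min_{1 ≤ b ≤ n} (n * (b + 1) + G (n - b))`. Let `F` have increments
`F (n + 1) - F n = n + m(n) + 2`, with `m(n)` the triangular root of `n`. The map
`b ↦ n * (b + 1) + F (n - b)` changes by `b - 1 - m(n - b - 1)` from `b` to `b + 1`, which is
nonpositive up to `b = m(n - 1) + 1` and nonnegative beyond; at that `b` its value is `F n`.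
So `F` satisfies the same recursion as `G`, and `F = G`.
-/

/-- Cost of a list of batch sizes, where `i` batches have already been scheduled
and `t` jobs already processed: batch `b` completes at time `i + 1 + t + b`. -/
def batchCostAux : ℕ → ℕ → List ℕ → ℕ
  | _, _, [] => 0
  | i, t, b :: rest => b * (i + 1 + t + b) + batchCostAux (i + 1) (t + b) rest

/-- Total cost of a composition `l = (b_1, ..., b_r)`:  `Σ_i b_i (i + Σ_{j ≤ i} b_j)`. -/
def batchCost (l : List ℕ) : ℕ := batchCostAux 0 0 l

/-- Minimum sum of completion times for `n` unit jobs in the list 1-batch problem. -/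
noncomputable def optcost (n : ℕ) : ℕ :=
  sInf {c | ∃ l : List ℕ, (∀ b ∈ l, 0 < b) ∧ l.sum = n ∧ batchCost l = c}

def tri (m : ℕ) : ℕ := m * (m + 1) / 2

lemma tri_succ (m : ℕ) : tri (m + 1) = tri m + (m + 1) := by
  unfold tri
  rw [show (m + 1) * (m + 1 + 1) = m * (m + 1) + (m + 1) * 2 by ring,
    Nat.add_mul_div_right _ _ two_pos]

lemma tri_mono : Monotone tri :=
  monotone_nat_of_le_succ fun m => by simp [tri_succ]

lemma le_tri (m : ℕ) : m ≤ tri m := by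
  induction m with
  | zero => simp [tri]
  | succ k ih => rw [tri_succ]; omega

def triRoot (n : ℕ) : ℕ := Nat.findGreatest (fun m => tri m ≤ n) n

lemma gc_tri_triRoot : GaloisConnection tri triRoot := fun a n =>
  ⟨fun h => Nat.le_findGreatest ((le_tri a).trans h) h,
    fun h => (tri_mono h).trans (Nat.findGreatest_spec (P := fun m => tri m ≤ n)
      (Nat.zero_le n) (by simp [tri]))⟩

lemma triRoot_eq_iff {n m : ℕ} : triRoot n = m ↔ tri m ≤ n ∧ n < tri (m + 1) := by
  rw [gc_tri_triRoot.le_iff_le, ← not_le, gc_tri_triRoot.le_iff_le]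
  omega

lemma triRoot_le_self (n : ℕ) : triRoot n ≤ n :=
  (le_tri _).trans (gc_tri_triRoot.l_u_le n)

/-- The paper's `F`, given through its increments instead of its closed form. -/
def optF : ℕ → ℕ
  | 0 => 0
  | n + 1 => optF n + n + triRoot n + 2

/-- A first batch of size `b`, followed by the remaining `n - b` jobs at cost `optF (n - b)`. -/
def splitCost (n b : ℕ) : ℕ := n * (b + 1) + optF (n - b)

lemma splitCost_succ {n b : ℕ} (h : b + 1 ≤ n) :
    splitCost n (b + 1) + triRoot (n - (b + 1)) + 1 = splitCost n b + b := by
  obtain ⟨a, rfl⟩ : ∃ a, n = a + (b + 1) := ⟨n - (b + 1), by omega⟩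
  simp only [splitCost, Nat.add_sub_cancel, show a + (b + 1) - b = a + 1 by omega, optF]
  ring

lemma optF_succ_eq_splitCost (s : ℕ) : optF (s + 1) = splitCost (s + 1) (triRoot s + 1) := by
  induction s with
  | zero => simp [splitCost, optF, Nat.le_zero.1 (triRoot_le_self 0)]
  | succ s ih =>
    obtain ⟨K, hK⟩ : ∃ K, triRoot (s + 1) = K + 1 :=
      Nat.exists_eq_add_one.2 (gc_tri_triRoot.le_iff_le.1 (by simp [tri]))
    obtain ⟨hKle, hKlt⟩ := triRoot_eq_iff.1 hK
    have := tri_succ K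
    have := tri_succ (K + 1)
    rw [splitCost, optF, ih, splitCost, hK]
    rcases hKle.lt_or_eq with hlt | heq
    · have hs : triRoot s = K + 1 := triRoot_eq_iff.2 ⟨by omega, by omega⟩
      have hK' : triRoot (s - (K + 1)) = K := triRoot_eq_iff.2 ⟨by omega, by omega⟩
      rw [hs, show s + 1 - (K + 1 + 1) = s - (K + 1) by omega,
        show s + 1 + 1 - (K + 1 + 1) = s - (K + 1) + 1 by omega, optF, hK']
      zify [show K + 1 ≤ s by omega]
      ring
    · have hs : triRoot s = K := triRoot_eq_iff.2 ⟨by omega, by omega⟩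
      rw [hs, show s + 1 + 1 - (K + 1 + 1) = s + 1 - (K + 1) by omega]
      ring

lemma splitCost_antitoneOn (s : ℕ) :
    AntitoneOn (splitCost (s + 1)) (Set.Icc 1 (triRoot s + 1)) := by
  refine antitoneOn_of_add_one_le Set.ordConnected_Icc fun a _ ha ha' => ?_
  obtain ⟨c, rfl⟩ : ∃ c, a = c + 1 := ⟨a - 1, by grind⟩
  have hMs := triRoot_le_self s
  have htri : tri (c + 1) ≤ s := (tri_mono (by grind)).trans (gc_tri_triRoot.l_u_le s)
  have hc : c ≤ triRoot (s + 1 - (c + 1 + 1)) :=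
    gc_tri_triRoot.le_iff_le.1 (by have := tri_succ c; omega)
  have := splitCost_succ (n := s + 1) (b := c + 1) (by grind)
  omega

lemma splitCost_monotoneOn (s : ℕ) :
    MonotoneOn (splitCost (s + 1)) (Set.Icc (triRoot s + 1) (s + 1)) := by
  refine monotoneOn_of_le_add_one Set.ordConnected_Icc fun a _ ha ha' => ?_
  have : triRoot (s + 1 - (a + 1)) ≤ triRoot s := gc_tri_triRoot.monotone_u (by omega)
  have := splitCost_succ (n := s + 1) (b := a) (by grind)
  grind

lemma optF_le_splitCost {n b : ℕ} (hb : 1 ≤ b) (hbn : b ≤ n) : optF n ≤ splitCost n b := by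
  obtain ⟨s, rfl⟩ : ∃ s, n = s + 1 := ⟨n - 1, by omega⟩
  have hMs := triRoot_le_self s
  rw [optF_succ_eq_splitCost]
  rcases le_total b (triRoot s + 1) with h | h
  · exact splitCost_antitoneOn s ⟨hb, h⟩ ⟨by omega, le_rfl⟩ h
  · exact splitCost_monotoneOn s ⟨le_rfl, by omega⟩ ⟨h, hbn⟩ h

lemma batchCostAux_eq (l : List ℕ) (i t : ℕ) :
    batchCostAux i t l = batchCost l + (i + t) * l.sum := by
  induction l generalizing i t with
  | nil => simp [batchCostAux, batchCost]
  | cons b l ih =>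
    rw [batchCost, batchCostAux, batchCostAux, ih, ih (0 + 1) (0 + b), List.sum_cons]
    ring

lemma batchCost_cons (b : ℕ) (l : List ℕ) :
    batchCost (b :: l) = (b + l.sum) * (b + 1) + batchCost l := by
  rw [batchCost, batchCostAux, batchCostAux_eq]
  ring

lemma optF_sum_le_batchCost {l : List ℕ} (hl : ∀ b ∈ l, 0 < b) : optF l.sum ≤ batchCost l := by
  induction l with
  | nil => simp [optF, batchCost, batchCostAux]
  | cons b l ih =>
    have hle := optF_le_splitCost (hl b List.mem_cons_self) (Nat.le_add_right b l.sum)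
    rw [splitCost, Nat.add_sub_cancel_left] at hle
    rw [List.sum_cons, batchCost_cons]
    have := ih fun x hx => hl x (List.mem_cons_of_mem b hx)
    omega

lemma exists_batchCost_eq_optF (n : ℕ) :
    ∃ l : List ℕ, (∀ b ∈ l, 0 < b) ∧ l.sum = n ∧ batchCost l = optF n := by
  induction n using Nat.strong_induction_on with
  | _ n ih =>
    rcases n with _ | s
    · exact ⟨[], by simp, rfl, rfl⟩
    have hMs := triRoot_le_self s
    obtain ⟨l, hpos, hsum, hcost⟩ := ih (s - triRoot s) (by omega)
    refine ⟨(triRoot s + 1) :: l, ?_, by simp [hsum]; omega, ?_⟩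
    · simpa using hpos
    · rw [batchCost_cons, hsum, hcost, optF_succ_eq_splitCost, splitCost,
        show triRoot s + 1 + (s - triRoot s) = s + 1 by omega]
      congr 2
      omega

lemma optcost_eq_optF (n : ℕ) : optcost n = optF n := by
  obtain ⟨l, hl, hsum, hcost⟩ := exists_batchCost_eq_optF n
  refine IsLeast.csInf_eq ⟨⟨l, hl, hsum, hcost⟩, ?_⟩
  rintro c ⟨l', hl', rfl, rfl⟩
  exact optF_sum_le_batchCost hl'

/-- For all `n ≥ 0`, `optcost (n+1) - optcost n = n + m + 2`, where `m` is the
unique nonnegative integer with `m(m+1)/2 ≤ n < (m+1)(m+2)/2`. -/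
theorem optcost_increment (n m : ℕ) (h1 : m * (m + 1) / 2 ≤ n)
    (h2 : n < (m + 1) * (m + 2) / 2) :
    optcost (n + 1) - optcost n = n + m + 2 := by
  have hm : triRoot n = m := triRoot_eq_iff.2 ⟨h1, h2⟩
  rw [optcost_eq_optF, optcost_eq_optF, optF, hm]
  omega
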